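/- Quadrature exactness on the disk-slice: let (s_j, w_j^{(s)}), j=1..M₁, be Gauss quadrature for the weight (β-s)^a (s-α)^b ρ(s)^{2c+1} on [α,β], and (t_i, w_i^{(t)}), i=1..M₂, Gauss quadrature for (1-t²)^c on [-1,1], with 2M₁−1 ≥ N and 2M₂−1 ≥ N. Then for every bivariate polynomial f of total degree ≤ N, ∬_Ω f(x,y) W^{(a,b,c)}(x,y) dA = (1/2) Σ_{i,j} w_j^{(s)} w_i^{(t)} [f(s_j, ρ(s_j) t_i) + f(s_j, −ρ(s_j) t_i)]. -/

import Mathlib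

/-!
Substituting `y = √(1 - x²) t` maps `(α, β) × (-1, 1)` onto the disk slice with Jacobian
`√(1 - x²)`, which turns `W` into the product `sliceWeight x * gegenbauerWeight t` of the two
Gauss weights. As the second is even, `f` may be replaced by its even part in `y`; only even
powers of `y = √(1 - x²) t` survive, so for fixed `x` this is a polynomial of degree `≤ N` in `t`,
and after the `t`-quadrature a polynomial of degree `≤ N` in `x`. Fubini and the two exactness
hypotheses then give the formula.

The nodes are neither assumed distinct nor to lie in the interval. Testing a rule with a
nonnegative weight against nonnegative polynomials shows that the total weight at a node value
is `≥ 0`, and `0` outside the closed interval; so only nodes `s j ∈ [α, β]` count, where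
`√(1 - s j²)² = 1 - s j²`. If the integrand is not integrable, both sides are `0`: the integral by
convention, and the quadrature sum because a non-integrable weight makes `∑ w j = 0`, which
forces every total node weight to vanish.
-/

open MeasureTheory Set Polynomial

def IsExactQuadrature {M : ℕ} (wgt : ℝ → ℝ) (l u : ℝ) (D : ℕ) (x w : Fin M → ℝ) : Prop :=
  ∀ p : ℝ[X], p.natDegree ≤ D → ∫ y in Ioo l u, p.eval y * wgt y = ∑ j, w j * p.eval (x j)

section Nodes

variable {M : ℕ} (x w : Fin M → ℝ)

noncomputable def nodeWeight (v : ℝ) : ℝ := ∑ j with x j = v, w j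

lemma sum_mul_eq_sum_nodeWeight_mul (g : ℝ → ℝ) :
    ∑ j, w j * g (x j) = ∑ v ∈ Finset.univ.image x, nodeWeight x w v * g v := by
  rw [← Finset.sum_fiberwise_of_maps_to (fun j _ => Finset.mem_image_of_mem x (Finset.mem_univ j))]
  refine Finset.sum_congr rfl fun v _ => ?_
  rw [nodeWeight, Finset.sum_mul]
  exact Finset.sum_congr rfl fun j hj => by rw [(Finset.mem_filter.mp hj).2]

noncomputable def nodePoly (v : ℝ) : ℝ[X] :=
  ∏ v' ∈ (Finset.univ.image x).erase v, (X - C v') ^ 2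

lemma nodePoly_eval_nonneg (v y : ℝ) : 0 ≤ (nodePoly x v).eval y := by
  rw [nodePoly, eval_prod]
  exact Finset.prod_nonneg fun v' _ => by simp only [eval_pow]; positivity

lemma nodePoly_eval_self_pos (v : ℝ) : 0 < (nodePoly x v).eval v := by
  rw [nodePoly, eval_prod]
  refine Finset.prod_pos fun v' hv' => ?_
  have : v - v' ≠ 0 := sub_ne_zero.mpr (Finset.ne_of_mem_erase hv').symm
  simp only [eval_pow, eval_sub, eval_X, eval_C]
  positivity

lemma nodePoly_eval_node_of_ne {v : ℝ} {j : Fin M} (h : x j ≠ v) :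
    (nodePoly x v).eval (x j) = 0 := by
  rw [nodePoly, eval_prod]
  exact Finset.prod_eq_zero
    (Finset.mem_erase.mpr ⟨h, Finset.mem_image_of_mem x (Finset.mem_univ j)⟩) (by simp)

lemma natDegree_nodePoly_node_le (j : Fin M) : (nodePoly x (x j)).natDegree ≤ 2 * (M - 1) := by
  have hcard : ((Finset.univ.image x).erase (x j)).card ≤ M - 1 := by
    rw [Finset.card_erase_of_mem (Finset.mem_image_of_mem x (Finset.mem_univ j))]
    have := Finset.card_image_le (s := Finset.univ) (f := x)
    simp only [Finset.card_univ, Fintype.card_fin] at this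
    omega
  refine (natDegree_prod_le _ _).trans ?_
  simp only [natDegree_pow, natDegree_X_sub_C, Finset.sum_const, smul_eq_mul]
  omega

lemma sum_mul_eval_nodePoly_mul (v : ℝ) (q : ℝ[X]) :
    ∑ j, w j * (nodePoly x v * q).eval (x j) = nodeWeight x w v * (nodePoly x v * q).eval v := by
  rw [nodeWeight, Finset.sum_mul, Finset.sum_filter]
  refine Finset.sum_congr rfl fun j _ => ?_
  by_cases h : x j = v
  · rw [if_pos h, h]
  · rw [if_neg h, eval_mul, nodePoly_eval_node_of_ne x h, zero_mul, mul_zero]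

end Nodes

namespace IsExactQuadrature

variable {M : ℕ} {wgt : ℝ → ℝ} {l u : ℝ} {x w : Fin M → ℝ}

lemma mono {D D' : ℕ} (hQ : IsExactQuadrature wgt l u D x w) (hD : D' ≤ D) :
    IsExactQuadrature wgt l u D' x w :=
  fun p hp => hQ p (hp.trans hD)

lemma nodeWeight_mul_eval_nonneg (hQ : IsExactQuadrature wgt l u (2 * M - 1) x w)
    (hwgt : ∀ y ∈ Ioo l u, 0 ≤ wgt y) (j : Fin M) {q : ℝ[X]} (hq : q.natDegree ≤ 1)
    (hq_nonneg : ∀ y ∈ Ioo l u, 0 ≤ q.eval y) : 0 ≤ nodeWeight x w (x j) * q.eval (x j) := by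
  -- `nodePoly x (x j) * q` is `≥ 0` on the interval and vanishes at every other node value.
  have hdeg : (nodePoly x (x j) * q).natDegree ≤ 2 * M - 1 :=
    natDegree_mul_le.trans (by have := natDegree_nodePoly_node_le x j; have := j.pos; omega)
  have hint : 0 ≤ ∫ y in Ioo l u, (nodePoly x (x j) * q).eval y * wgt y :=
    setIntegral_nonneg measurableSet_Ioo fun y hy => mul_nonneg
      (by rw [eval_mul]; exact mul_nonneg (nodePoly_eval_nonneg x _ y) (hq_nonneg y hy)) (hwgt y hy)
  rw [hQ _ hdeg, sum_mul_eval_nodePoly_mul, eval_mul] at hint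
  have := nodePoly_eval_self_pos x (x j)
  nlinarith

lemma nodeWeight_nonneg (hQ : IsExactQuadrature wgt l u (2 * M - 1) x w)
    (hwgt : ∀ y ∈ Ioo l u, 0 ≤ wgt y) (j : Fin M) : 0 ≤ nodeWeight x w (x j) := by
  simpa using hQ.nodeWeight_mul_eval_nonneg hwgt j (q := 1) (by simp) (by simp)

lemma nodeWeight_eq_zero_of_notMem_Icc (hQ : IsExactQuadrature wgt l u (2 * M - 1) x w)
    (hwgt : ∀ y ∈ Ioo l u, 0 ≤ wgt y) (j : Fin M) (hj : x j ∉ Icc l u) :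
    nodeWeight x w (x j) = 0 := by
  obtain ⟨q, hq, hq_nonneg, hq_neg⟩ : ∃ q : ℝ[X], q.natDegree ≤ 1 ∧
      (∀ y ∈ Ioo l u, 0 ≤ q.eval y) ∧ q.eval (x j) < 0 := by
    rcases not_and_or.mp hj with h | h <;> rw [not_le] at h
    · refine ⟨X - C ((x j + l) / 2), by compute_degree!, fun y hy => ?_, ?_⟩
      · simp only [eval_sub, eval_X, eval_C]; linarith [hy.1]
      · simp only [eval_sub, eval_X, eval_C]; linarith
    · refine ⟨C ((u + x j) / 2) - X, by compute_degree!, fun y hy => ?_, ?_⟩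
      · simp only [eval_sub, eval_X, eval_C]; linarith [hy.2]
      · simp only [eval_sub, eval_X, eval_C]; linarith
  have := hQ.nodeWeight_mul_eval_nonneg hwgt j hq hq_nonneg
  have := hQ.nodeWeight_nonneg hwgt j
  nlinarith

lemma nodeWeight_eq_zero_of_not_integrableOn (hQ : IsExactQuadrature wgt l u (2 * M - 1) x w)
    (hwgt : ∀ y ∈ Ioo l u, 0 ≤ wgt y) (hint : ¬IntegrableOn wgt (Ioo l u)) (j : Fin M) :
    nodeWeight x w (x j) = 0 := by
  have htotal : ∑ v ∈ Finset.univ.image x, nodeWeight x w v = 0 := by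
    have h1 := hQ 1 (by simp)
    simp only [eval_one, one_mul, mul_one, integral_undef hint] at h1
    simpa [← h1] using (sum_mul_eq_sum_nodeWeight_mul x w fun _ => 1).symm
  refine (Finset.sum_eq_zero_iff_of_nonneg ?_).mp htotal _
    (Finset.mem_image_of_mem x (Finset.mem_univ j))
  simp only [Finset.mem_image, Finset.mem_univ, true_and]
  rintro _ ⟨k, rfl⟩
  exact hQ.nodeWeight_nonneg hwgt k

lemma sum_mul_congr (hQ : IsExactQuadrature wgt l u (2 * M - 1) x w)
    (hwgt : ∀ y ∈ Ioo l u, 0 ≤ wgt y) {g h : ℝ → ℝ} (hgh : EqOn g h (Icc l u)) :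
    ∑ j, w j * g (x j) = ∑ j, w j * h (x j) := by
  rw [sum_mul_eq_sum_nodeWeight_mul, sum_mul_eq_sum_nodeWeight_mul]
  refine Finset.sum_congr rfl fun v hv => ?_
  obtain ⟨j, -, rfl⟩ := Finset.mem_image.mp hv
  by_cases hj : x j ∈ Icc l u
  · rw [hgh hj]
  · rw [hQ.nodeWeight_eq_zero_of_notMem_Icc hwgt j hj, zero_mul, zero_mul]

lemma sum_mul_eq_zero_of_not_integrableOn (hQ : IsExactQuadrature wgt l u (2 * M - 1) x w)
    (hwgt : ∀ y ∈ Ioo l u, 0 ≤ wgt y) (hint : ¬IntegrableOn wgt (Ioo l u)) (g : ℝ → ℝ) :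
    ∑ j, w j * g (x j) = 0 := by
  rw [sum_mul_eq_sum_nodeWeight_mul]
  refine Finset.sum_eq_zero fun v hv => ?_
  obtain ⟨j, -, rfl⟩ := Finset.mem_image.mp hv
  rw [hQ.nodeWeight_eq_zero_of_not_integrableOn hwgt hint, zero_mul]

end IsExactQuadrature

section EvenPart

variable (f : MvPolynomial (Fin 2) ℝ)

noncomputable def evenEval (x y : ℝ) : ℝ :=
  (MvPolynomial.eval ![x, y] f + MvPolynomial.eval ![x, -y] f) / 2

/-- For `r ^ 2 = 1 - s ^ 2`, the polynomial `τ ↦ evenEval f s (r * τ)`. -/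
noncomputable def evenSlice (s : ℝ) : ℝ[X] :=
  ∑ d ∈ f.support with Even (d 1), C (f.coeff d * s ^ d 0 * (1 - s ^ 2) ^ (d 1 / 2)) * X ^ d 1

/-- `s ↦ ∑ i, wt i * (evenSlice f s).eval (t i)`, as a polynomial in `s`. -/
noncomputable def evenSliceQuadrature {M : ℕ} (t wt : Fin M → ℝ) : ℝ[X] :=
  ∑ d ∈ f.support with Even (d 1),
    C (f.coeff d * ∑ i, wt i * t i ^ d 1) * X ^ d 0 * (1 - X ^ 2) ^ (d 1 / 2)

lemma add_le_of_mem_support_of_totalDegree_le {N : ℕ} (hf : f.totalDegree ≤ N)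
    {d : Fin 2 →₀ ℕ} (hd : d ∈ f.support) : d 0 + d 1 ≤ N := by
  have h := MvPolynomial.le_totalDegree hd
  rw [Finsupp.sum_fintype _ _ (fun _ => rfl), Fin.sum_univ_two] at h
  omega

lemma natDegree_evenSlice_le {N : ℕ} (hf : f.totalDegree ≤ N) (s : ℝ) :
    (evenSlice f s).natDegree ≤ N := by
  refine natDegree_sum_le_of_forall_le _ _ fun d hd => ?_
  have := add_le_of_mem_support_of_totalDegree_le f hf (Finset.mem_filter.mp hd).1
  exact (natDegree_C_mul_X_pow_le _ _).trans (by omega)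

lemma natDegree_evenSliceQuadrature_le {N : ℕ} (hf : f.totalDegree ≤ N) {M : ℕ}
    (t wt : Fin M → ℝ) : (evenSliceQuadrature f t wt).natDegree ≤ N := by
  refine natDegree_sum_le_of_forall_le _ _ fun d hd => ?_
  have := add_le_of_mem_support_of_totalDegree_le f hf (Finset.mem_filter.mp hd).1
  have : (C (f.coeff d * ∑ i, wt i * t i ^ d 1) * X ^ d 0 *
      (1 - X ^ 2 : ℝ[X]) ^ (d 1 / 2)).natDegree ≤ d 0 + d 1 / 2 * 2 := by
    compute_degree
  omega

lemma eval_evenSlice {s r : ℝ} (hr : r ^ 2 = 1 - s ^ 2) (τ : ℝ) :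
    (evenSlice f s).eval τ = evenEval f s (r * τ) := by
  rw [evenEval, MvPolynomial.eval_eq', MvPolynomial.eval_eq', evenSlice, eval_finsetSum,
    ← Finset.sum_add_distrib, Finset.sum_div, Finset.sum_filter]
  refine Finset.sum_congr rfl fun d _ => ?_
  simp only [Fin.prod_univ_two, Matrix.cons_val_zero, Matrix.cons_val_one,
    eval_mul, eval_C, eval_pow, eval_X]
  split_ifs with h
  · obtain ⟨m, hm⟩ := h.two_dvd
    simp only [hm, Nat.mul_div_cancel_left _ two_pos, pow_mul, neg_sq, mul_pow, hr]
    ring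
  · rw [(Nat.not_even_iff_odd.mp h).neg_pow]
    ring

lemma eval_evenSliceQuadrature {M : ℕ} (t wt : Fin M → ℝ) (s : ℝ) :
    (evenSliceQuadrature f t wt).eval s = ∑ i, wt i * (evenSlice f s).eval (t i) := by
  simp only [evenSliceQuadrature, evenSlice, eval_finsetSum, eval_mul, eval_C, eval_pow, eval_X,
    eval_sub, eval_one, Finset.mul_sum, Finset.sum_mul]
  rw [Finset.sum_comm]
  refine Finset.sum_congr rfl fun d _ => Finset.sum_congr rfl fun i _ => ?_
  ring

end EvenPart

section FiberScale

variable (g : ℝ → ℝ)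

def fiberScale (z : ℝ × ℝ) : ℝ × ℝ := (z.1, g z.1 * z.2)

noncomputable def fiberScaleDeriv (z : ℝ × ℝ) : ℝ × ℝ →L[ℝ] ℝ × ℝ :=
  LinearMap.toContinuousLinearMap <| Matrix.toLin (Module.Basis.finTwoProd ℝ)
    (Module.Basis.finTwoProd ℝ) !![1, 0; deriv g z.1 * z.2, g z.1]

lemma det_fiberScaleDeriv (z : ℝ × ℝ) : (fiberScaleDeriv g z).det = g z.1 := by
  rw [fiberScaleDeriv, ContinuousLinearMap.det, LinearMap.coe_toContinuousLinearMap,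
    LinearMap.det_toLin, Matrix.det_fin_two_of]
  ring

lemma hasFDerivAt_fiberScale {z : ℝ × ℝ} (hg : DifferentiableAt ℝ g z.1) :
    HasFDerivAt (fiberScale g) (fiberScaleDeriv g z) z := by
  have hg' : HasFDerivAt (fun w : ℝ × ℝ => g w.1)
      (deriv g z.1 • ContinuousLinearMap.fst ℝ ℝ ℝ) z :=
    hg.hasDerivAt.comp_hasFDerivAt z hasFDerivAt_fst
  have h := hasFDerivAt_fst.prodMk (hg'.mul hasFDerivAt_snd)
  refine h.congr_fderiv ?_
  ext <;> simp [fiberScaleDeriv, Matrix.toLin_finTwoProd_apply, mul_comm]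

lemma injOn_fiberScale {S : Set (ℝ × ℝ)} (hg : ∀ z ∈ S, g z.1 ≠ 0) : InjOn (fiberScale g) S := by
  rintro ⟨s₁, t₁⟩ h₁ ⟨s₂, t₂⟩ - h
  simp only [fiberScale, Prod.mk.injEq] at h
  obtain ⟨rfl, h⟩ := h
  exact Prod.ext rfl (mul_left_cancel₀ (hg _ h₁) h)

lemma setIntegral_image_fiberScale {S : Set (ℝ × ℝ)} (hS : MeasurableSet S)
    (hg : ∀ z ∈ S, DifferentiableAt ℝ g z.1) (hg₀ : ∀ z ∈ S, g z.1 ≠ 0) (F : ℝ × ℝ → ℝ) :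
    ∫ z in fiberScale g '' S, F z = ∫ z in S, |g z.1| * F (fiberScale g z) := by
  rw [integral_image_eq_integral_abs_det_fderiv_smul volume hS
    (fun z hz => (hasFDerivAt_fiberScale g (hg z hz)).hasFDerivWithinAt) (injOn_fiberScale g hg₀)]
  simp only [det_fiberScaleDeriv, smul_eq_mul]

end FiberScale

lemma diskSlice_eq_image_fiberScale {α β : ℝ} (hα : -1 ≤ α) (hβ : β ≤ 1) :
    {z : ℝ × ℝ | α < z.1 ∧ z.1 < β ∧ z.2 ^ 2 < 1 - z.1 ^ 2} =
      fiberScale (fun x => √(1 - x ^ 2)) '' Ioo α β ×ˢ Ioo (-1) 1 := by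
  ext ⟨x, y⟩
  simp only [mem_ofPred_eq, mem_image, mem_prod, mem_Ioo, Prod.exists, fiberScale, Prod.mk.injEq]
  constructor
  · rintro ⟨hαx, hxβ, hy⟩
    have hρ : 0 < √(1 - x ^ 2) := Real.sqrt_pos.mpr (by nlinarith)
    have hyρ : |y| < √(1 - x ^ 2) :=
      abs_lt_of_sq_lt_sq (by rwa [Real.sq_sqrt (by nlinarith)]) hρ.le
    refine ⟨x, y / √(1 - x ^ 2), ⟨⟨hαx, hxβ⟩, abs_lt.mp ?_⟩, rfl, mul_div_cancel₀ y hρ.ne'⟩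
    rwa [abs_div, abs_of_pos hρ, div_lt_one hρ]
  · rintro ⟨x, t, ⟨⟨hαx, hxβ⟩, ht₁, ht₂⟩, rfl, rfl⟩
    have hx : 0 < 1 - x ^ 2 := by nlinarith
    refine ⟨hαx, hxβ, ?_⟩
    rw [mul_pow, Real.sq_sqrt hx.le]
    nlinarith [mul_pos hx (show 0 < 1 - t ^ 2 by nlinarith)]

section Reflection

variable {X : Type*} [MeasurableSpace X] {μ : Measure X} {σ : X → X}

lemma integrableOn_comp_of_preimage_eq (hσ : MeasurePreserving σ μ μ)
    (hσe : MeasurableEmbedding σ) {S : Set X} (hS : σ ⁻¹' S = S) {F : X → ℝ}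
    (hF : IntegrableOn F S μ) :
    IntegrableOn (fun x => F (σ x)) S μ := by
  have := ((hσ.restrict_preimage_emb hσe S).integrable_comp_emb hσe).mpr hF
  rwa [hS] at this

lemma setIntegral_eq_half_add_comp (hσ : MeasurePreserving σ μ μ) (hσe : MeasurableEmbedding σ)
    {S : Set X} (hS : σ ⁻¹' S = S) {F : X → ℝ} (hF : IntegrableOn F S μ) :
    ∫ x in S, F x ∂μ = ∫ x in S, (F x + F (σ x)) / 2 ∂μ := by
  have hFσ := integrableOn_comp_of_preimage_eq hσ hσe hS hF
  have hσS : ∫ x in S, F (σ x) ∂μ = ∫ x in S, F x ∂μ := by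
    simpa [hS] using hσ.setIntegral_preimage_emb hσe F S
  rw [integral_div, integral_add hF hFσ, hσS]
  ring

end Reflection

lemma measurePreserving_reflect_snd :
    MeasurePreserving (fun z : ℝ × ℝ => (z.1, -z.2)) volume volume := by
  have h := (MeasurePreserving.id (volume : Measure ℝ)).prod
    (Measure.measurePreserving_neg (volume : Measure ℝ))
  rwa [← Measure.volume_eq_prod] at h

lemma measurableEmbedding_reflect_snd : MeasurableEmbedding (fun z : ℝ × ℝ => (z.1, -z.2)) :=
  ((MeasurableEquiv.refl ℝ).prodCongr (MeasurableEquiv.neg ℝ)).measurableEmbedding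

lemma integrableOn_continuous_mul_prod {φ : ℝ × ℝ → ℝ} (hφ : Continuous φ) {w₁ w₂ : ℝ → ℝ}
    {a b c d : ℝ} (hw₁ : IntegrableOn w₁ (Ioo a b)) (hw₂ : IntegrableOn w₂ (Ioo c d)) :
    IntegrableOn (fun z => φ z * (w₁ z.1 * w₂ z.2)) (Ioo a b ×ˢ Ioo c d) := by
  obtain ⟨C, hC⟩ := (isCompact_Icc.prod isCompact_Icc).exists_bound_of_continuousOn
    (hφ.continuousOn (s := Icc a b ×ˢ Icc c d))
  have hprod : IntegrableOn (fun z : ℝ × ℝ => w₁ z.1 * w₂ z.2) (Ioo a b ×ˢ Ioo c d) := by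
    rw [IntegrableOn, Measure.volume_eq_prod, ← Measure.prod_restrict]
    exact hw₁.mul_prod hw₂
  refine hprod.bdd_mul (c := C) hφ.aestronglyMeasurable
    ((ae_restrict_iff' (measurableSet_Ioo.prod measurableSet_Ioo)).mpr (.of_forall fun z hz => ?_))
  exact hC z ⟨Ioo_subset_Icc_self hz.1, Ioo_subset_Icc_self hz.2⟩

noncomputable def sliceWeight (α β a b c x : ℝ) : ℝ :=
  (β - x) ^ a * (x - α) ^ b * √(1 - x ^ 2) ^ (2 * c + 1)

noncomputable def gegenbauerWeight (c t : ℝ) : ℝ := (1 - t ^ 2) ^ c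

lemma sliceWeight_nonneg (α β a b c : ℝ) : ∀ x ∈ Ioo α β, 0 ≤ sliceWeight α β a b c x := by
  intro x ⟨hαx, hxβ⟩
  have : 0 ≤ β - x := by linarith
  have : 0 ≤ x - α := by linarith
  unfold sliceWeight
  positivity

lemma gegenbauerWeight_nonneg (c : ℝ) : ∀ t ∈ Ioo (-1) 1, 0 ≤ gegenbauerWeight c t :=
  fun _ ⟨h₁, h₂⟩ => Real.rpow_nonneg (by nlinarith) c

lemma gegenbauerWeight_neg (c t : ℝ) : gegenbauerWeight c (-t) = gegenbauerWeight c t := by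
  rw [gegenbauerWeight, gegenbauerWeight, neg_sq]

lemma abs_sqrt_mul_diskSliceWeight (α β a b c : ℝ) {x t : ℝ} (hx : x ^ 2 < 1) (ht : t ^ 2 ≤ 1) :
    |√(1 - x ^ 2)| * ((β - x) ^ a * (x - α) ^ b * (1 - x ^ 2 - (√(1 - x ^ 2) * t) ^ 2) ^ c) =
      sliceWeight α β a b c x * gegenbauerWeight c t := by
  have hx' : 0 < 1 - x ^ 2 := by linarith
  have hsplit : 1 - x ^ 2 - (√(1 - x ^ 2) * t) ^ 2 = (1 - x ^ 2) * (1 - t ^ 2) := by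
    rw [mul_pow, Real.sq_sqrt hx'.le]; ring
  have hpow : √(1 - x ^ 2) ^ (2 * c + 1) = √(1 - x ^ 2) * (1 - x ^ 2) ^ c := by
    rw [Real.sqrt_eq_rpow, ← Real.rpow_mul hx'.le, show 1 / 2 * (2 * c + 1) = c + 1 / 2 by ring,
      Real.rpow_add hx', mul_comm]
  rw [abs_of_nonneg (Real.sqrt_nonneg _), hsplit, Real.mul_rpow hx'.le (by linarith),
    sliceWeight, gegenbauerWeight, hpow]
  ring

lemma setIntegral_diskSlice_eq {α β : ℝ} (hα : -1 ≤ α) (hβ : β ≤ 1) (a b c : ℝ) (F : ℝ × ℝ → ℝ) :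
    ∫ z in {z : ℝ × ℝ | α < z.1 ∧ z.1 < β ∧ z.2 ^ 2 < 1 - z.1 ^ 2},
        F z * ((β - z.1) ^ a * (z.1 - α) ^ b * (1 - z.1 ^ 2 - z.2 ^ 2) ^ c) =
      ∫ z in Ioo α β ×ˢ Ioo (-1) 1,
        F (z.1, √(1 - z.1 ^ 2) * z.2) * (sliceWeight α β a b c z.1 * gegenbauerWeight c z.2) := by
  have hR : MeasurableSet (Ioo α β ×ˢ Ioo (-1 : ℝ) 1) := measurableSet_Ioo.prod measurableSet_Ioo
  have hx : ∀ z ∈ Ioo α β ×ˢ Ioo (-1 : ℝ) 1, z.1 ^ 2 < 1 := fun z hz => by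
    nlinarith [hz.1.1, hz.1.2]
  rw [diskSlice_eq_image_fiberScale hα hβ, setIntegral_image_fiberScale _ hR
    (fun z hz => DifferentiableAt.sqrt (by fun_prop) (by linarith [hx z hz]))
    (fun z hz => (Real.sqrt_pos.mpr (by linarith [hx z hz])).ne')]
  refine setIntegral_congr_fun hR fun z hz => ?_
  rw [fiberScale, ← abs_sqrt_mul_diskSliceWeight α β a b c (hx z hz)
    (by nlinarith [hz.2.1, hz.2.2])]
  ring

lemma setIntegral_Ioo_prod_eq_sum_evenSliceQuadrature {α β : ℝ} (hα : -1 ≤ α) (hβ : β ≤ 1)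
    {w₁ w₂ : ℝ → ℝ} (hw₂ : ∀ t, w₂ (-t) = w₂ t) {f : MvPolynomial (Fin 2) ℝ} {N : ℕ}
    (hf : f.totalDegree ≤ N) {M₁ M₂ : ℕ} {s ws : Fin M₁ → ℝ} {t wt : Fin M₂ → ℝ}
    (hs : IsExactQuadrature w₁ α β N s ws) (ht : IsExactQuadrature w₂ (-1) 1 N t wt)
    (hint : IntegrableOn
      (fun z : ℝ × ℝ => MvPolynomial.eval ![z.1, √(1 - z.1 ^ 2) * z.2] f * (w₁ z.1 * w₂ z.2))
      (Ioo α β ×ˢ Ioo (-1) 1)) :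
    ∫ z in Ioo α β ×ˢ Ioo (-1) 1,
        MvPolynomial.eval ![z.1, √(1 - z.1 ^ 2) * z.2] f * (w₁ z.1 * w₂ z.2) =
      ∑ j, ws j * (evenSliceQuadrature f t wt).eval (s j) := by
  set R := Ioo α β ×ˢ Ioo (-1 : ℝ) 1
  set A := fun z : ℝ × ℝ => MvPolynomial.eval ![z.1, √(1 - z.1 ^ 2) * z.2] f * (w₁ z.1 * w₂ z.2)
  have hR : MeasurableSet R := measurableSet_Ioo.prod measurableSet_Ioo
  have hreflect : (fun z : ℝ × ℝ => (z.1, -z.2)) ⁻¹' R = R := by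
    ext z
    simp only [R, mem_preimage, mem_prod, mem_Ioo, neg_lt, neg_neg]
    tauto
  have heven : EqOn (fun z => (A z + A (z.1, -z.2)) / 2)
      (fun z => (evenSlice f z.1).eval z.2 * w₂ z.2 * w₁ z.1) R := by
    intro z hz
    simp only [A]
    rw [eval_evenSlice f (Real.sq_sqrt (by nlinarith [hz.1.1, hz.1.2])), evenEval, hw₂, mul_neg]
    ring
  have hint_even := IntegrableOn.congr_fun ((hint.add (integrableOn_comp_of_preimage_eq
    measurePreserving_reflect_snd measurableEmbedding_reflect_snd hreflect hint)).div_const 2)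
    heven hR
  rw [setIntegral_eq_half_add_comp measurePreserving_reflect_snd measurableEmbedding_reflect_snd
    hreflect hint, setIntegral_congr_fun hR heven, Measure.volume_eq_prod,
    setIntegral_prod _ hint_even]
  calc ∫ x in Ioo α β, ∫ y in Ioo (-1) 1, (evenSlice f x).eval y * w₂ y * w₁ x
      = ∫ x in Ioo α β, (evenSliceQuadrature f t wt).eval x * w₁ x := by
        refine setIntegral_congr_fun measurableSet_Ioo fun x _ => ?_
        rw [integral_mul_const, ht _ (natDegree_evenSlice_le f hf x), eval_evenSliceQuadrature]
    _ = ∑ j, ws j * (evenSliceQuadrature f t wt).eval (s j) :=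
        hs _ (natDegree_evenSliceQuadrature_le f hf t wt)

theorem stmt16_general
    (α β : ℝ) (h0 : 0 < α) (hβ : β < 1)
    (a b c : ℝ) (N M₁ M₂ : ℕ)
    (s : Fin M₁ → ℝ) (ws : Fin M₁ → ℝ) (t : Fin M₂ → ℝ) (wt : Fin M₂ → ℝ)
    (hM₁ : N + 1 ≤ 2 * M₁) (hM₂ : N + 1 ≤ 2 * M₂)
    -- Gauss quadrature for (β-s)^a (s-α)^b ρ(s)^{2c+1} on [α,β]
    (hs : ∀ p : Polynomial ℝ, p.natDegree ≤ 2 * M₁ - 1 →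
      ∫ x in Ioo α β,
          p.eval x * ((β - x) ^ a * (x - α) ^ b *
            Real.sqrt (1 - x ^ 2) ^ (2 * c + 1)) =
        ∑ j, ws j * p.eval (s j))
    -- Gauss quadrature for (1-t²)^c on [-1,1]
    (ht : ∀ p : Polynomial ℝ, p.natDegree ≤ 2 * M₂ - 1 →
      ∫ x in Ioo (-1 : ℝ) 1, p.eval x * (1 - x ^ 2) ^ c =
        ∑ i, wt i * p.eval (t i))
    (Ω : Set (ℝ × ℝ))
    (hΩ : Ω = {z : ℝ × ℝ | α < z.1 ∧ z.1 < β ∧ z.2 ^ 2 < 1 - z.1 ^ 2})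
    (W : ℝ × ℝ → ℝ)
    (hW : ∀ z : ℝ × ℝ,
      W z = (β - z.1) ^ a * (z.1 - α) ^ b * (1 - z.1 ^ 2 - z.2 ^ 2) ^ c) :
    ∀ f : MvPolynomial (Fin 2) ℝ, f.totalDegree ≤ N →
      ∫ z in Ω, MvPolynomial.eval ![z.1, z.2] f * W z =
        (1 / 2) * ∑ j, ∑ i, ws j * wt i *
          (MvPolynomial.eval ![s j, Real.sqrt (1 - s j ^ 2) * t i] f +
            MvPolynomial.eval ![s j, -(Real.sqrt (1 - s j ^ 2) * t i)] f) := by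
  intro f hf
  have hα : -1 ≤ α := by linarith
  have hs' : IsExactQuadrature (sliceWeight α β a b c) α β (2 * M₁ - 1) s ws := hs
  have ht' : IsExactQuadrature (gegenbauerWeight c) (-1) 1 (2 * M₂ - 1) t wt := ht
  set Φ : ℝ → ℝ := fun x => ∑ i, wt i * evenEval f x (√(1 - x ^ 2) * t i) with hΦ
  have hRHS : (1 / 2) * ∑ j, ∑ i, ws j * wt i *
      (MvPolynomial.eval ![s j, √(1 - s j ^ 2) * t i] f +
        MvPolynomial.eval ![s j, -(√(1 - s j ^ 2) * t i)] f) = ∑ j, ws j * Φ (s j) := by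
    simp only [hΦ, evenEval, Finset.mul_sum]
    exact Finset.sum_congr rfl fun j _ => Finset.sum_congr rfl fun i _ => by ring
  simp_rw [hΩ, hW]
  rw [setIntegral_diskSlice_eq hα hβ.le a b c, hRHS]
  by_cases hint : IntegrableOn (fun z : ℝ × ℝ => MvPolynomial.eval ![z.1, √(1 - z.1 ^ 2) * z.2] f
      * (sliceWeight α β a b c z.1 * gegenbauerWeight c z.2)) (Ioo α β ×ˢ Ioo (-1) 1)
  · rw [setIntegral_Ioo_prod_eq_sum_evenSliceQuadrature hα hβ.le (gegenbauerWeight_neg c) hf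
      (hs'.mono (by omega)) (ht'.mono (by omega)) hint]
    refine hs'.sum_mul_congr (g := fun x => (evenSliceQuadrature f t wt).eval x) (h := Φ)
      (sliceWeight_nonneg α β a b c) fun x hx => ?_
    have hx' : (0 : ℝ) ≤ 1 - x ^ 2 := by nlinarith [hx.1, hx.2]
    simp only [hΦ, eval_evenSliceQuadrature, eval_evenSlice f (Real.sq_sqrt hx')]
  · rw [integral_undef hint]
    rcases not_and_or.mp (mt (fun h => integrableOn_continuous_mul_prod
      ((MvPolynomial.continuous_eval f).comp (by fun_prop)) h.1 h.2) hint) with h | h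
    · exact (hs'.sum_mul_eq_zero_of_not_integrableOn (sliceWeight_nonneg α β a b c) h Φ).symm
    · refine (Finset.sum_eq_zero fun j _ => ?_).symm
      have hΦj : Φ (s j) = 0 := ht'.sum_mul_eq_zero_of_not_integrableOn
        (gegenbauerWeight_nonneg c) h fun τ => evenEval f (s j) (√(1 - s j ^ 2) * τ)
      rw [hΦj, mul_zero]

/-- exactness of the tensor Gauss quadrature rule on the
disk-slice for bivariate polynomials of total degree at most `N`. -/
theorem stmt16
    (α β : ℝ) (h0 : 0 < α) (hαβ : α < β) (hβ : β < 1)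
    (a b c : ℝ) (N M₁ M₂ : ℕ)
    (s : Fin M₁ → ℝ) (ws : Fin M₁ → ℝ) (t : Fin M₂ → ℝ) (wt : Fin M₂ → ℝ)
    (hM₁ : N + 1 ≤ 2 * M₁) (hM₂ : N + 1 ≤ 2 * M₂)
    -- Gauss quadrature for (β-s)^a (s-α)^b ρ(s)^{2c+1} on [α,β]
    (hs : ∀ p : Polynomial ℝ, p.natDegree ≤ 2 * M₁ - 1 →
      ∫ x in Ioo α β,
          p.eval x * ((β - x) ^ a * (x - α) ^ b *
            Real.sqrt (1 - x ^ 2) ^ (2 * c + 1)) =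
        ∑ j, ws j * p.eval (s j))
    -- Gauss quadrature for (1-t²)^c on [-1,1]
    (ht : ∀ p : Polynomial ℝ, p.natDegree ≤ 2 * M₂ - 1 →
      ∫ x in Ioo (-1 : ℝ) 1, p.eval x * (1 - x ^ 2) ^ c =
        ∑ i, wt i * p.eval (t i))
    (Ω : Set (ℝ × ℝ))
    (hΩ : Ω = {z : ℝ × ℝ | α < z.1 ∧ z.1 < β ∧ z.2 ^ 2 < 1 - z.1 ^ 2})
    (W : ℝ × ℝ → ℝ)
    (hW : ∀ z : ℝ × ℝ,
      W z = (β - z.1) ^ a * (z.1 - α) ^ b * (1 - z.1 ^ 2 - z.2 ^ 2) ^ c) :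
    ∀ f : MvPolynomial (Fin 2) ℝ, f.totalDegree ≤ N →
      ∫ z in Ω, MvPolynomial.eval ![z.1, z.2] f * W z =
        (1 / 2) * ∑ j, ∑ i, ws j * wt i *
          (MvPolynomial.eval ![s j, Real.sqrt (1 - s j ^ 2) * t i] f +
            MvPolynomial.eval ![s j, -(Real.sqrt (1 - s j ^ 2) * t i)] f) :=
  stmt16_general α β h0 hβ a b c N M₁ M₂ s ws t wt hM₁ hM₂ hs ht Ω hΩ W hW
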